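/- For real numbers 0 < T' ≤ T and an angle ϑ ∈ (0, π/2), the complex temporal domain Δ_ϑ^{T',T} equals the set-sum [0, T−T'] + Δ_ϑ^{(T')}, i.e. Δ_ϑ^{T',T} = { ξ + t' : ξ ∈ [0, T−T'], t' ∈ Δ_ϑ^{(T')} }. -/

import Mathlib

open Real Set

/-- The open sector `Δ_ϑ = { ϱ e^{iθ} : ϱ > 0, θ ∈ (−ϑ, ϑ) }`. -/
noncomputable def sector (ϑ : ℝ) : Set ℂ :=
  {t : ℂ | ∃ ϱ θ : ℝ, 0 < ϱ ∧ θ ∈ Set.Ioo (-ϑ) ϑ ∧ t = ϱ * Complex.exp (θ * Complex.I)}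

/-- The truncated triangle `Δ_ϑ^{(T')} = Δ_ϑ ∩ { 0 < Re t < T' }`. -/
noncomputable def triangleSet (ϑ T' : ℝ) : Set ℂ :=
  sector ϑ ∩ {t : ℂ | 0 < t.re ∧ t.re < T'}

/-- The temporal domain `Δ_ϑ^{T',T} = Δ_ϑ^{(T)} ∩ { |Im t| < T'·tan ϑ }`. -/
noncomputable def DeltaSet (ϑ T' T : ℝ) : Set ℂ :=
  triangleSet ϑ T ∩ {t : ℂ | |t.im| < T' * Real.tan ϑ}

/-! For `ϑ ∈ (0, π/2)` a point `t` lies in the sector iff `a(t) := |Im t| / tan ϑ < Re t`, so all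
the sets involved are cut out by conditions on `Re t` and `a(t)`, and a real shift `t ↦ t - ξ` moves
`Re t` while fixing `a(t)`. A point `t` of `Δ_ϑ^{T',T}` is therefore `ξ + t'` with `t'` in the
triangle exactly when `ξ ∈ [0, T - T'] ∩ (Re t - T', Re t - a(t))`, and this intersection is
nonempty because `a(t) < T'`, `a(t) < Re t` and `Re t < T`. -/

open Complex in
lemma mem_sector_iff_arg {ϑ : ℝ} (hϑ : ϑ ≤ π) {t : ℂ} :
    t ∈ sector ϑ ↔ t ≠ 0 ∧ |arg t| < ϑ := by
  constructor
  · rintro ⟨ϱ, θ, hϱ, hθ, rfl⟩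
    have hθ' : θ ∈ Ioc (-π) π := ⟨by linarith [hθ.1], by linarith [hθ.2]⟩
    refine ⟨mul_ne_zero (ofReal_ne_zero.2 hϱ.ne') (exp_ne_zero _), ?_⟩
    rw [exp_mul_I, arg_mul_cos_add_sin_mul_I hϱ hθ']
    exact abs_lt.2 hθ
  · rintro ⟨ht, harg⟩
    exact ⟨‖t‖, arg t, norm_pos_iff.2 ht, abs_lt.1 harg, (norm_mul_exp_arg_mul_I t).symm⟩

open Complex in
lemma abs_arg_lt_iff_abs_im_div_tan_lt_re {ϑ : ℝ} (hϑ : ϑ ∈ Ioo 0 (π / 2)) {t : ℂ}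
    (hre : 0 < t.re) : |arg t| < ϑ ↔ |t.im| / Real.tan ϑ < t.re := by
  have harg : arg t ∈ Ioo (-(π / 2)) (π / 2) :=
    abs_lt.1 (abs_arg_lt_pi_div_two_iff.2 (Or.inl hre))
  have hϑ' : ϑ ∈ Ioo (-(π / 2)) (π / 2) := ⟨by linarith [hϑ.1, pi_pos], hϑ.2⟩
  have hnegϑ : -ϑ ∈ Ioo (-(π / 2)) (π / 2) := ⟨neg_lt_neg hϑ.2, by linarith [hϑ.1, pi_pos]⟩
  rw [abs_lt, ← strictMonoOn_tan.lt_iff_lt hnegϑ harg, ← strictMonoOn_tan.lt_iff_lt harg hϑ',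
    Real.tan_neg, tan_arg, ← abs_lt, abs_div, abs_of_pos hre,
    div_lt_comm₀ hre (tan_pos_of_pos_of_lt_pi_div_two hϑ.1 hϑ.2)]

lemma mem_sector_iff {ϑ : ℝ} (hϑ : ϑ ∈ Ioo 0 (π / 2)) {t : ℂ} :
    t ∈ sector ϑ ↔ |t.im| / Real.tan ϑ < t.re := by
  rw [mem_sector_iff_arg (by linarith [hϑ.2, pi_pos])]
  constructor
  · rintro ⟨ht, harg⟩
    have hre : 0 < t.re :=
      (Complex.abs_arg_lt_pi_div_two_iff.1 (harg.trans hϑ.2)).resolve_right ht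
    exact (abs_arg_lt_iff_abs_im_div_tan_lt_re hϑ hre).1 harg
  · intro h
    have hre : 0 < t.re :=
      (div_nonneg (abs_nonneg _) (tan_pos_of_pos_of_lt_pi_div_two hϑ.1 hϑ.2).le).trans_lt h
    exact ⟨fun ht ↦ hre.ne' (by simp [ht]), (abs_arg_lt_iff_abs_im_div_tan_lt_re hϑ hre).2 h⟩

lemma mem_triangleSet_iff {ϑ T' : ℝ} (hϑ : ϑ ∈ Ioo 0 (π / 2)) {t : ℂ} :
    t ∈ triangleSet ϑ T' ↔ |t.im| / Real.tan ϑ < t.re ∧ t.re < T' := by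
  have htan : 0 ≤ Real.tan ϑ := (tan_pos_of_pos_of_lt_pi_div_two hϑ.1 hϑ.2).le
  simp only [triangleSet, mem_inter_iff, mem_sector_iff hϑ, mem_ofPred_eq]
  exact ⟨fun ⟨h, _, h'⟩ ↦ ⟨h, h'⟩,
    fun ⟨h, h'⟩ ↦ ⟨h, (div_nonneg (abs_nonneg _) htan).trans_lt h, h'⟩⟩

lemma mem_DeltaSet_iff {ϑ T' T : ℝ} (hϑ : ϑ ∈ Ioo 0 (π / 2)) {t : ℂ} :
    t ∈ DeltaSet ϑ T' T ↔
      |t.im| / Real.tan ϑ < t.re ∧ t.re < T ∧ |t.im| / Real.tan ϑ < T' := by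
  rw [DeltaSet, mem_inter_iff, mem_triangleSet_iff hϑ, mem_ofPred_eq,
    div_lt_iff₀ (a := T') (tan_pos_of_pos_of_lt_pi_div_two hϑ.1 hϑ.2), and_assoc]

lemma Icc_inter_Ioo_nonempty {α : Type*} [LinearOrder α] [DenselyOrdered α] {p q r s : α}
    (hpq : p < q) (hps : p < s) (hrq : r < q) (hrs : r ≤ s) : (Icc r s ∩ Ioo p q).Nonempty := by
  rcases lt_or_ge p r with hpr | hrp
  · exact ⟨r, left_mem_Icc.2 hrs, hpr, hrq⟩
  · obtain ⟨ξ, hpξ, hξ⟩ := exists_between (lt_min hpq hps)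
    exact ⟨ξ, ⟨hrp.trans hpξ.le, (hξ.trans_le (min_le_right _ _)).le⟩, hpξ,
      hξ.trans_le (min_le_left _ _)⟩

theorem Delta_eq_interval_add_triangle_general (ϑ T' T : ℝ)
    (hϑ : ϑ ∈ Set.Ioo 0 (π / 2)) (hT : T' ≤ T) :
    DeltaSet ϑ T' T =
      {t : ℂ | ∃ ξ ∈ Set.Icc (0 : ℝ) (T - T'), ∃ t' ∈ triangleSet ϑ T', t = (ξ : ℂ) + t'} := by
  ext t
  simp only [mem_DeltaSet_iff hϑ, mem_ofPred_eq]
  constructor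
  · rintro ⟨hsec, hre, him⟩
    obtain ⟨ξ, hξ, hlo, hhi⟩ := Icc_inter_Ioo_nonempty (p := t.re - T')
      (q := t.re - |t.im| / Real.tan ϑ) (r := 0) (s := T - T') (by linarith) (by linarith)
      (by linarith) (by linarith)
    refine ⟨ξ, hξ, t - ξ, (mem_triangleSet_iff hϑ).2 ?_, by ring⟩
    simp only [Complex.sub_re, Complex.sub_im, Complex.ofReal_re, Complex.ofReal_im, sub_zero]
    constructor <;> linarith
  · rintro ⟨ξ, ⟨hξ0, hξT⟩, t', ht', rfl⟩
    rw [mem_triangleSet_iff hϑ] at ht'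
    simp only [Complex.add_re, Complex.add_im, Complex.ofReal_re, Complex.ofReal_im, zero_add]
    refine ⟨?_, ?_, ?_⟩ <;> linarith

theorem Delta_eq_interval_add_triangle (ϑ T' T : ℝ)
    (hϑ : ϑ ∈ Set.Ioo 0 (π / 2)) (hT' : 0 < T') (hT : T' ≤ T) :
    DeltaSet ϑ T' T =
      {t : ℂ | ∃ ξ ∈ Set.Icc (0 : ℝ) (T - T'), ∃ t' ∈ triangleSet ϑ T', t = (ξ : ℂ) + t'} :=
  Delta_eq_interval_add_triangle_general ϑ T' T hϑ hT
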